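/- For all x, y in V, one has max(‖⟨x, y⟩‖_A, ‖θ_{x,y}‖) ≤ 4 Ω(x) Ω(y), where θ_{x,y} : V → V is the bounded linear operator θ_{x,y}(z) = x⟨y, z⟩ and ‖θ_{x,y}‖ is its operator norm. -/

import Mathlib

/-!
Setting: `A` is a C*-algebra and `V` is a Hilbert C*-module over `A`.
`WithCStarModule (A × V)` is the Hilbert `A`-module `A ⊕ V`, with inner product
`⟪(a, y), (b, z)⟫ = a * b + ⟪y, z⟫` and norm `‖(a, y)‖ = ‖a * a + ⟪y, y⟫‖ ^ (1/2)`
(both provided by Mathlib).  For `x : V` and `lam : ℂ` with `|lam| = 1`, the operator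
`M_{x,lam} : A ⊕ V → A ⊕ V`, `(a, y) ↦ (conj lam • ⟪x, y⟫, lam • (x <• a))` is encoded
by a family `M` of continuous linear maps satisfying the predicate `IsM` below, and the
numerical radius is `numRadius M x = (1/2) * sup_{|lam| = 1} ‖M x lam‖`.
-/

open scoped RightActions InnerProductSpace

noncomputable section

variable {A V : Type*} [NonUnitalCStarAlgebra A] [PartialOrder A] [StarOrderedRing A]
  [NormedAddCommGroup V] [NormedSpace ℂ V] [SMul Aᵐᵒᵖ V] [CStarModule Aᵐᵒᵖ V] [CompleteSpace V]

/-- The element of the Hilbert `A`-module `A ⊕ V` with components `a : A` and `y : V`. -/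
def pairElem (a : A) (y : V) : WithCStarModule Aᵐᵒᵖ (Aᵐᵒᵖ × V) :=
  (WithCStarModule.equiv Aᵐᵒᵖ (Aᵐᵒᵖ × V)).symm (MulOpposite.op a, y)

/-- `IsM M` asserts that for every `x : V` and every unimodular `lam : ℂ`, the continuous
linear map `M x lam` is the operator `M_{x,lam} : (a, y) ↦ (conj lam • ⟪x, y⟫, lam • (x <• a))`
on `A ⊕ V`. -/
def IsM (M : V → ℂ → (WithCStarModule Aᵐᵒᵖ (Aᵐᵒᵖ × V) →L[ℂ] WithCStarModule Aᵐᵒᵖ (Aᵐᵒᵖ × V))) : Prop :=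
  ∀ (x : V) (lam : ℂ), ‖lam‖ = 1 → ∀ (a : A) (y : V),
    M x lam (pairElem a y) = pairElem ((starRingEnd ℂ) lam • MulOpposite.unop (inner Aᵐᵒᵖ x y)) (lam • (x <• a))

/-- The numerical radius `Ω(x) = (1/2) * sup_{|lam| = 1} ‖M_{x,lam}‖`. -/
def numRadius (M : V → ℂ → (WithCStarModule Aᵐᵒᵖ (Aᵐᵒᵖ × V) →L[ℂ] WithCStarModule Aᵐᵒᵖ (Aᵐᵒᵖ × V)))
    (x : V) : ℝ :=
  (1 / 2) * sSup ((fun lam : ℂ => ‖M x lam‖) '' {lam : ℂ | ‖lam‖ = 1})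

/-- `IsTheta Θ` asserts that for all `x y : V`, the continuous linear map `Θ x y` is the
"compact" operator `θ_{x,y} : V → V`, `z ↦ x <• ⟪y, z⟫`. -/
def IsTheta (Θ : V → V → (V →L[ℂ] V)) : Prop :=
  ∀ (x y z : V), Θ x y z = x <• MulOpposite.unop (inner Aᵐᵒᵖ y z)

/-!
Evaluating `M_{x,1}` at `(0, x)` gives `(⟪x, x⟫, 0)`, so `‖x‖ ^ 2 ≤ ‖M_{x,1}‖ * ‖x‖` and hence
`‖x‖ ≤ 2 Ω(x)`. Both `⟪x, y⟫` and `θ_{x,y}` have norm at most `‖x‖ * ‖y‖` by the Cauchy–Schwarz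
inequality of the Hilbert module, which gives the bound `4 Ω(x) Ω(y)`. The estimate
`‖M_{x,λ}‖ ≤ 2 ‖x‖` is needed only to know that the supremum defining `Ω(x)` is finite, so that
`sSup` is not its junk value `0`.
-/

section

omit [CompleteSpace V]

omit [StarOrderedRing A] in
lemma CStarModule.norm_op_smul_le (x : V) (a : A) : ‖x <• a‖ ≤ ‖x‖ * ‖a‖ := by
  refine (pow_le_pow_iff_left₀ (norm_nonneg _) (by positivity) two_ne_zero).mp ?_
  rw [norm_sq_eq (A := Aᵐᵒᵖ), inner_op_smul_left, inner_op_smul_right]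
  calc _ ≤ ‖MulOpposite.op a‖ * ‖⟪x, x⟫_Aᵐᵒᵖ‖ * ‖star (MulOpposite.op a)‖ := norm_mul₃_le
    _ = (‖x‖ * ‖a‖) ^ 2 := by rw [norm_star, MulOpposite.norm_op, ← norm_sq_eq (A := Aᵐᵒᵖ)]; ring

lemma CStarModule.norm_unop_inner_le (x y : V) : ‖MulOpposite.unop ⟪x, y⟫_Aᵐᵒᵖ‖ ≤ ‖x‖ * ‖y‖ :=
  (MulOpposite.norm_unop _).trans_le (norm_inner_le V)

lemma norm_pairElem_le (a : A) (y : V) : ‖pairElem a y‖ ≤ ‖a‖ + ‖y‖ :=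
  WithCStarModule.prod_norm_le_norm_add _

lemma norm_le_norm_pairElem (a : A) (y : V) : ‖a‖ ≤ ‖pairElem a y‖ :=
  (le_max_left _ _).trans (WithCStarModule.max_le_prod_norm (pairElem a y))

namespace IsM

variable {M : V → ℂ → (WithCStarModule Aᵐᵒᵖ (Aᵐᵒᵖ × V) →L[ℂ] WithCStarModule Aᵐᵒᵖ (Aᵐᵒᵖ × V))}

lemma opNorm_le (hM : IsM M) (x : V) {lam : ℂ} (hlam : ‖lam‖ = 1) : ‖M x lam‖ ≤ 2 * ‖x‖ := by
  refine (M x lam).opNorm_le_bound (by positivity) fun v => ?_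
  have hv := WithCStarModule.max_le_prod_norm v
  have hv₁ : ‖v.1.unop‖ ≤ ‖v‖ := (le_max_left _ _).trans hv
  have hv₂ : ‖v.2‖ ≤ ‖v‖ := (le_max_right _ _).trans hv
  change ‖M x lam (pairElem v.1.unop v.2)‖ ≤ _
  rw [hM x lam hlam]
  calc _ ≤ ‖starRingEnd ℂ lam • MulOpposite.unop ⟪x, v.2⟫_Aᵐᵒᵖ‖ + ‖lam • (x <• v.1.unop)‖ :=
        norm_pairElem_le _ _
    _ = ‖MulOpposite.unop ⟪x, v.2⟫_Aᵐᵒᵖ‖ + ‖x <• v.1.unop‖ := by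
        rw [norm_smul, norm_smul, RCLike.norm_conj, hlam, one_mul, one_mul]
    _ ≤ ‖x‖ * ‖v.2‖ + ‖x‖ * ‖v.1.unop‖ :=
        add_le_add (CStarModule.norm_unop_inner_le x v.2) (CStarModule.norm_op_smul_le x v.1.unop)
    _ ≤ ‖x‖ * ‖v‖ + ‖x‖ * ‖v‖ := by gcongr
    _ = 2 * ‖x‖ * ‖v‖ := by ring

lemma norm_le_opNorm_one (hM : IsM M) (x : V) : ‖x‖ ≤ ‖M x 1‖ := by
  have key : ‖x‖ ^ 2 ≤ ‖M x 1‖ * ‖x‖ :=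
    calc ‖x‖ ^ 2 = ‖MulOpposite.unop ⟪x, x⟫_Aᵐᵒᵖ‖ := by
          rw [MulOpposite.norm_unop, CStarModule.norm_sq_eq (A := Aᵐᵒᵖ)]
      _ ≤ ‖M x 1 (pairElem 0 x)‖ := by
          rw [hM x 1 norm_one 0 x, map_one, one_smul]
          exact norm_le_norm_pairElem _ _
      _ ≤ ‖M x 1‖ * ‖pairElem (0 : A) x‖ := (M x 1).le_opNorm _
      _ ≤ ‖M x 1‖ * ‖x‖ := by
          gcongr
          simpa using norm_pairElem_le (0 : A) x
  nlinarith [norm_nonneg (M x 1), norm_nonneg x]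

lemma norm_le_two_mul_numRadius (hM : IsM M) (x : V) : ‖x‖ ≤ 2 * numRadius M x := by
  have hbdd : BddAbove ((fun lam : ℂ => ‖M x lam‖) '' {lam : ℂ | ‖lam‖ = 1}) :=
    ⟨2 * ‖x‖, by rintro _ ⟨lam, hlam, rfl⟩; exact hM.opNorm_le x hlam⟩
  calc ‖x‖ ≤ ‖M x 1‖ := hM.norm_le_opNorm_one x
    _ ≤ sSup ((fun lam : ℂ => ‖M x lam‖) '' {lam : ℂ | ‖lam‖ = 1}) :=
        le_csSup hbdd ⟨1, norm_one, rfl⟩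
    _ = 2 * numRadius M x := by rw [numRadius]; ring

end IsM

lemma IsTheta.opNorm_le {Θ : V → V → (V →L[ℂ] V)} (hΘ : IsTheta (A := A) Θ) (x y : V) :
    ‖Θ x y‖ ≤ ‖x‖ * ‖y‖ := by
  refine (Θ x y).opNorm_le_bound (by positivity) fun z => ?_
  rw [hΘ x y z]
  calc _ ≤ ‖x‖ * ‖MulOpposite.unop ⟪y, z⟫_Aᵐᵒᵖ‖ := CStarModule.norm_op_smul_le _ _
    _ ≤ ‖x‖ * (‖y‖ * ‖z‖) := by gcongr; exact CStarModule.norm_unop_inner_le y z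
    _ = ‖x‖ * ‖y‖ * ‖z‖ := by ring

end

theorem stmt13 (M : V → ℂ → (WithCStarModule Aᵐᵒᵖ (Aᵐᵒᵖ × V) →L[ℂ] WithCStarModule Aᵐᵒᵖ (Aᵐᵒᵖ × V))) (hM : IsM M) (Θ : V → V → (V →L[ℂ] V)) (hΘ : IsTheta (A := A) Θ) (x y : V) :
    max ‖MulOpposite.unop (inner Aᵐᵒᵖ x y)‖ ‖Θ x y‖ ≤ 4 * numRadius M x * numRadius M y := by
  have hx := hM.norm_le_two_mul_numRadius x
  have hxy : ‖x‖ * ‖y‖ ≤ 4 * numRadius M x * numRadius M y :=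
    calc ‖x‖ * ‖y‖ ≤ (2 * numRadius M x) * (2 * numRadius M y) :=
          mul_le_mul hx (hM.norm_le_two_mul_numRadius y) (norm_nonneg y) ((norm_nonneg x).trans hx)
      _ = 4 * numRadius M x * numRadius M y := by ring
  exact max_le ((CStarModule.norm_unop_inner_le x y).trans hxy) ((hΘ.opNorm_le x y).trans hxy)
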